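/- Let 2 < p < 10/3 and define H̃(v) = (1/p)|f(v)|^p + (1/12)|f(v)|^12 − (2/3)|v|^6 and h̃(v) = |f(v)|^(p−2) f(v) f'(v) + |f(v)|^10 f(v) f'(v) − 4|v|^4 v for v ∈ ℝ. Then: lim_{v→0} H̃(v)/v² = 0, lim_{|v|→∞} H̃(v)/|v|^6 = 0, lim_{v→0} h̃(v)/|v| = 0, and lim_{|v|→∞} h̃(v)/|v|^5 = 0. -/

import Mathlib

open MeasureTheory Filter Topology

/-- `g(s) = ∫_0^s √(1 + 2τ²) dτ`, the inverse of the dual function `f`. -/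
noncomputable def g (s : ℝ) : ℝ := ∫ τ in (0:ℝ)..s, Real.sqrt (1 + 2 * τ ^ 2)

/-- The dual function `f = g⁻¹`. -/
noncomputable def f : ℝ → ℝ := Function.invFun g

/-- `H̃(v) = (1/p)|f(v)|^p + (1/12)|f(v)|^12 − (2/3)|v|^6`. -/
noncomputable def Htilde (p v : ℝ) : ℝ :=
  (1 / p) * |f v| ^ p + (1 / 12) * |f v| ^ (12:ℕ) - (2 / 3) * |v| ^ (6:ℕ)

/-- `h̃(v) = |f(v)|^(p−2) f(v) f'(v) + |f(v)|^10 f(v) f'(v) − 4|v|^4 v`. -/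
noncomputable def htilde (p v : ℝ) : ℝ :=
  |f v| ^ (p - 2) * f v * deriv f v + |f v| ^ (10:ℕ) * f v * deriv f v
    - 4 * |v| ^ (4:ℕ) * v

lemma contInt : Continuous (fun τ : ℝ => Real.sqrt (1 + 2 * τ ^ 2)) := by
  continuity

lemma int_one_le (τ : ℝ) : (1:ℝ) ≤ Real.sqrt (1 + 2 * τ ^ 2) := by
  rw [Real.one_le_sqrt]
  nlinarith [sq_nonneg τ]

lemma int_pos' (τ : ℝ) : (0:ℝ) < Real.sqrt (1 + 2 * τ ^ 2) :=
  lt_of_lt_of_le one_pos (int_one_le τ)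

lemma g_hasStrictDeriv (s : ℝ) :
    HasStrictDerivAt g (Real.sqrt (1 + 2 * s ^ 2)) s :=
  contInt.integral_hasStrictDerivAt 0 s

lemma g_cont : Continuous g :=
  continuous_iff_continuousAt.mpr fun s => (g_hasStrictDeriv s).hasDerivAt.continuousAt

lemma g_strictMono : StrictMono g :=
  strictMono_of_deriv_pos (fun s => by
    rw [(g_hasStrictDeriv s).hasDerivAt.deriv]; exact int_pos' s)

lemma g_lower {s : ℝ} (hs : 0 ≤ s) : Real.sqrt 2 * s ^ 2 / 2 ≤ g s := by
  have h : ∀ τ ∈ Set.Icc (0:ℝ) s, Real.sqrt 2 * τ ≤ Real.sqrt (1 + 2 * τ ^ 2) := by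
    intro τ hτ
    have h1 : Real.sqrt 2 * τ = Real.sqrt (2 * τ ^ 2) := by
      rw [Real.sqrt_mul (by norm_num), Real.sqrt_sq hτ.1]
    rw [h1]
    exact Real.sqrt_le_sqrt (by linarith)
  have := intervalIntegral.integral_mono_on (μ := volume) hs
    ((by continuity : Continuous fun τ:ℝ => Real.sqrt 2 * τ).intervalIntegrable 0 s)
    (contInt.intervalIntegrable 0 s) h
  have h2 : (∫ τ in (0:ℝ)..s, Real.sqrt 2 * τ) = Real.sqrt 2 * s ^ 2 / 2 := by
    rw [intervalIntegral.integral_const_mul, integral_id]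
    ring
  rw [g]; rw [h2] at this; exact this

lemma g_upper {s : ℝ} (hs : 0 ≤ s) : g s ≤ s + Real.sqrt 2 * s ^ 2 / 2 := by
  have h : ∀ τ ∈ Set.Icc (0:ℝ) s, Real.sqrt (1 + 2 * τ ^ 2) ≤ 1 + Real.sqrt 2 * τ := by
    intro τ hτ
    have h0 : 0 ≤ Real.sqrt 2 * τ := mul_nonneg (Real.sqrt_nonneg 2) hτ.1
    rw [show (1:ℝ) + Real.sqrt 2 * τ = Real.sqrt ((1 + Real.sqrt 2 * τ)^2) by
      rw [Real.sqrt_sq (by linarith)]]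
    apply Real.sqrt_le_sqrt
    have : (Real.sqrt 2 * τ)^2 = 2 * τ^2 := by
      rw [mul_pow, Real.sq_sqrt (by norm_num)]
    nlinarith
  have := intervalIntegral.integral_mono_on (μ := volume) hs
    (contInt.intervalIntegrable 0 s)
    ((by continuity : Continuous fun τ:ℝ => 1 + Real.sqrt 2 * τ).intervalIntegrable 0 s) h
  have h2 : (∫ τ in (0:ℝ)..s, (1 + Real.sqrt 2 * τ)) = s + Real.sqrt 2 * s ^ 2 / 2 := by
    rw [intervalIntegral.integral_add (intervalIntegrable_const)
      ((by continuity : Continuous fun τ:ℝ => Real.sqrt 2 * τ).intervalIntegrable 0 s),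
      intervalIntegral.integral_const_mul, integral_id, intervalIntegral.integral_const]
    simp only [smul_eq_mul]; ring
  rw [g]; rw [h2] at this; exact this

lemma g_ge_id {s : ℝ} (hs : 0 ≤ s) : s ≤ g s := by
  have h : ∀ τ ∈ Set.Icc (0:ℝ) s, (1:ℝ) ≤ Real.sqrt (1 + 2 * τ ^ 2) :=
    fun τ _ => int_one_le τ
  have := intervalIntegral.integral_mono_on (μ := volume) hs
    (intervalIntegrable_const) (contInt.intervalIntegrable 0 s) h
  simpa [g] using this

lemma g_odd (s : ℝ) : g (-s) = - g s := by
  have h := intervalIntegral.integral_comp_neg (a := (0:ℝ)) (b := s)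
    (f := fun τ => Real.sqrt (1 + 2 * τ ^ 2))
  simp only [neg_zero] at h
  have h1 : (∫ x in (0:ℝ)..s, Real.sqrt (1 + 2 * (-x) ^ 2)) = g s := by
    rw [g]; congr 1; ext x; congr 1; ring
  have h2 : (∫ x in (-s:ℝ)..0, Real.sqrt (1 + 2 * x ^ 2)) = - g (-s) := by
    rw [intervalIntegral.integral_symm, g]
  rw [h1, h2] at h
  linarith

lemma g_surj : Function.Surjective g := by
  apply Continuous.surjective g_cont
  · exact tendsto_atTop_mono' _ (eventually_atTop.2 ⟨0, fun s hs => g_ge_id hs⟩) tendsto_id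
  · rw [tendsto_atBot]
    intro b
    filter_upwards [eventually_le_atBot (min b 0)] with s hs
    have hs0 : s ≤ 0 := le_trans hs (min_le_right _ _)
    have h1 : -s ≤ g (-s) := g_ge_id (by linarith)
    have h2 : g s = - g (-s) := by rw [← g_odd, neg_neg]
    have h3 : s ≤ b := le_trans hs (min_le_left _ _)
    linarith

lemma g_zero : g 0 = 0 := by simp [g]

lemma f_g (s : ℝ) : f (g s) = s := Function.leftInverse_invFun g_strictMono.injective s
lemma g_f (v : ℝ) : g (f v) = v := Function.rightInverse_invFun g_surj v

lemma f_zero : f 0 = 0 := by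
  have := f_g 0; rwa [g_zero] at this

lemma f_strictMono : StrictMono f := by
  intro a b hab
  by_contra h
  push_neg at h
  have := g_strictMono.monotone h
  rw [g_f, g_f] at this
  linarith

lemma f_surj : Function.Surjective f := fun s => ⟨g s, f_g s⟩

lemma f_odd (v : ℝ) : f (-v) = - f v := by
  apply g_strictMono.injective
  rw [g_f, g_odd, g_f]

lemma f_cont : Continuous f := by
  exact (OrderIso.continuous (StrictMono.orderIsoOfSurjective f f_strictMono f_surj) : _)

lemma f_hasStrictDeriv (v : ℝ) :
    HasStrictDerivAt f (Real.sqrt (1 + 2 * (f v) ^ 2))⁻¹ v :=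
  HasStrictDerivAt.of_local_left_inverse f_cont.continuousAt (g_hasStrictDeriv (f v))
    (ne_of_gt (int_pos' _)) (Filter.Eventually.of_forall g_f)

lemma deriv_f (v : ℝ) : deriv f v = (Real.sqrt (1 + 2 * (f v) ^ 2))⁻¹ :=
  (f_hasStrictDeriv v).hasDerivAt.deriv

lemma deriv_f_nonneg (v : ℝ) : 0 ≤ deriv f v := by
  rw [deriv_f]; positivity

lemma deriv_f_le_one (v : ℝ) : deriv f v ≤ 1 := by
  rw [deriv_f]
  have h := int_pos' (f v)
  have : (1:ℝ) ≤ Real.sqrt (1 + 2 * (f v) ^ 2) := by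
    rw [Real.one_le_sqrt]; nlinarith [sq_nonneg (f v)]
  rw [inv_le_one_iff₀]; right; exact this

lemma f_nonneg {v : ℝ} (hv : 0 ≤ v) : 0 ≤ f v := by
  rcases eq_or_lt_of_le hv with h | h
  · rw [← h, f_zero]
  · have := f_strictMono h; rw [f_zero] at this; linarith

lemma sqrt2_sq : Real.sqrt 2 * Real.sqrt 2 = 2 := Real.mul_self_sqrt (by norm_num)

lemma f_sq_le {v : ℝ} (hv : 0 ≤ v) : (f v) ^ 2 ≤ Real.sqrt 2 * v := by
  have h := g_lower (f_nonneg hv)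
  rw [g_f] at h
  nlinarith [sqrt2_sq, Real.sqrt_nonneg 2, sq_nonneg (f v)]

lemma f_sq_ge {v : ℝ} (hv : 0 ≤ v) : Real.sqrt 2 * (v - f v) ≤ (f v) ^ 2 := by
  have h := g_upper (f_nonneg hv)
  rw [g_f] at h
  nlinarith [sqrt2_sq, Real.sqrt_nonneg 2, sq_nonneg (f v)]

lemma f_tendsto_atTop : Tendsto f atTop atTop := by
  rw [tendsto_atTop]
  intro b
  filter_upwards [eventually_ge_atTop (g b)] with v hv
  have := f_strictMono.monotone hv
  rwa [f_g] at this

lemma f_div_tendsto_zero : Tendsto (fun t => f t / t) atTop (𝓝 0) := by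
  have hub : ∀ᶠ t : ℝ in atTop, f t / t ≤ Real.sqrt (Real.sqrt 2 / t) := by
    filter_upwards [eventually_gt_atTop (0:ℝ)] with t ht
    rw [Real.le_sqrt (div_nonneg (f_nonneg ht.le) ht.le) (by positivity)]
    rw [div_pow, div_le_div_iff₀ (by positivity) ht]
    have h2 := f_sq_le ht.le
    nlinarith [Real.sqrt_nonneg 2]
  have hnn : ∀ᶠ t : ℝ in atTop, 0 ≤ f t / t := by
    filter_upwards [eventually_gt_atTop (0:ℝ)] with t ht
    exact div_nonneg (f_nonneg ht.le) ht.le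
  have hlim : Tendsto (fun t : ℝ => Real.sqrt (Real.sqrt 2 / t)) atTop (𝓝 0) := by
    rw [show (0:ℝ) = Real.sqrt 0 by simp]
    apply (Real.continuous_sqrt.tendsto 0).comp
    exact Tendsto.div_atTop tendsto_const_nhds tendsto_id
  exact squeeze_zero' hnn hub hlim

lemma fsq_div_tendsto : Tendsto (fun t => (f t) ^ 2 / t) atTop (𝓝 (Real.sqrt 2)) := by
  have hlb : ∀ᶠ t : ℝ in atTop, Real.sqrt 2 - Real.sqrt 2 * (f t / t) ≤ (f t) ^ 2 / t := by
    filter_upwards [eventually_gt_atTop (0:ℝ)] with t ht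
    have h := f_sq_ge ht.le
    have key : Real.sqrt 2 - Real.sqrt 2 * (f t / t) = Real.sqrt 2 * (t - f t) / t := by
      field_simp
    rw [key]
    gcongr
  have hub : ∀ᶠ t : ℝ in atTop, (f t) ^ 2 / t ≤ Real.sqrt 2 := by
    filter_upwards [eventually_gt_atTop (0:ℝ)] with t ht
    rw [div_le_iff₀ ht]
    nlinarith [f_sq_le ht.le]
  have hlim : Tendsto (fun t : ℝ => Real.sqrt 2 - Real.sqrt 2 * (f t / t)) atTop
      (𝓝 (Real.sqrt 2)) := by
    have := (f_div_tendsto_zero.const_mul (Real.sqrt 2)).const_sub (Real.sqrt 2)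
    simpa using this
  exact tendsto_of_tendsto_of_tendsto_of_le_of_le' hlim tendsto_const_nhds hlb hub

-- slope limit at 0
lemma f_slope : Tendsto (fun v => f v / v) (𝓝[≠] (0:ℝ)) (𝓝 1) := by
  have h := (f_hasStrictDeriv 0).hasDerivAt
  rw [hasDerivAt_iff_tendsto_slope] at h
  have h1 : (Real.sqrt (1 + 2 * (f 0) ^ 2))⁻¹ = 1 := by
    rw [f_zero]; norm_num
  rw [h1] at h
  apply h.congr
  intro v
  simp [slope, f_zero, div_eq_inv_mul]

lemma abs_f_slope : Tendsto (fun v => |f v| / |v|) (𝓝[≠] (0:ℝ)) (𝓝 1) := by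
  have := f_slope.abs
  simp only [abs_one, abs_div] at this
  exact this

-- the generic 0-limit
lemma aux_zero {q r : ℝ} (hq : 0 < q) (hr : r < q) :
    Tendsto (fun v : ℝ => |f v| ^ q / |v| ^ r) (𝓝[≠] (0:ℝ)) (𝓝 0) := by
  have habs : Tendsto (fun v : ℝ => |v|) (𝓝[≠] (0:ℝ)) (𝓝[≥] 0) := by
    rw [tendsto_nhdsWithin_iff]
    constructor
    · exact (continuous_abs.tendsto' 0 0 abs_zero).mono_left nhdsWithin_le_nhds
    · exact Eventually.of_forall fun v => abs_nonneg v
  have h1 : Tendsto (fun v : ℝ => (|f v| / |v|) ^ q) (𝓝[≠] (0:ℝ)) (𝓝 1) := by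
    have hc : ContinuousAt (fun x : ℝ => x ^ q) 1 :=
      Real.continuousAt_rpow_const 1 q (Or.inl one_ne_zero)
    have := hc.tendsto.comp abs_f_slope
    simpa [Function.comp_def] using this
  have h2 : Tendsto (fun v : ℝ => |v| ^ (q - r)) (𝓝[≠] (0:ℝ)) (𝓝 0) := by
    have hc : ContinuousAt (fun x : ℝ => x ^ (q - r)) 0 :=
      Real.continuousAt_rpow_const 0 (q - r) (Or.inr (by linarith))
    have := hc.tendsto.comp (habs.mono_right nhdsWithin_le_nhds)
    simp only [Function.comp_def] at this
    rwa [Real.zero_rpow (by linarith : q - r ≠ 0)] at this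
  have key : ∀ᶠ v in 𝓝[≠] (0:ℝ),
      (|f v| / |v|) ^ q * |v| ^ (q - r) = |f v| ^ q / |v| ^ r := by
    filter_upwards [self_mem_nhdsWithin] with v hv
    have hv0 : (0:ℝ) < |v| := abs_pos.mpr hv
    rw [Real.div_rpow (abs_nonneg _) (abs_nonneg _), Real.rpow_sub hv0]
    field_simp
  have := (h1.mul h2).congr' key
  simpa using this

lemma part1 (p : ℝ) (hp : 2 < p) :
    Tendsto (fun v : ℝ => Htilde p v / v ^ 2) (𝓝[≠] (0:ℝ)) (𝓝 0) := by
  have e1 : Tendsto (fun v : ℝ => |f v| ^ p / |v| ^ (2:ℝ)) (𝓝[≠] (0:ℝ)) (𝓝 0) :=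
    aux_zero (by linarith) hp
  have e2 : Tendsto (fun v : ℝ => |f v| ^ (12:ℝ) / |v| ^ (2:ℝ)) (𝓝[≠] (0:ℝ)) (𝓝 0) :=
    aux_zero (by norm_num) (by norm_num)
  have e3 : Tendsto (fun v : ℝ => |v| ^ (4:ℕ)) (𝓝[≠] (0:ℝ)) (𝓝 0) := by
    have h : Continuous (fun v : ℝ => |v| ^ (4:ℕ)) := continuous_abs.pow 4
    have h0 := h.tendsto 0
    norm_num at h0
    exact h0.mono_left nhdsWithin_le_nhds
  have comb := ((e1.const_mul (1/p)).add (e2.const_mul (1/12))).sub (e3.const_mul (2/3))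
  rw [show (1/p) * 0 + (1/12) * 0 - (2/3) * 0 = (0:ℝ) by ring] at comb
  refine comb.congr' ?_
  filter_upwards [self_mem_nhdsWithin] with v hv
  have hv0 : |v| ≠ 0 := abs_ne_zero.mpr hv
  have h2 : |v| ^ (2:ℝ) = |v| ^ (2:ℕ) := by
    rw [show (2:ℝ) = ((2:ℕ):ℝ) by norm_num, Real.rpow_natCast]
  have h12 : |f v| ^ (12:ℝ) = |f v| ^ (12:ℕ) := by
    rw [show (12:ℝ) = ((12:ℕ):ℝ) by norm_num, Real.rpow_natCast]
  have hp0 : p ≠ 0 := by linarith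
  rw [Htilde, h2, h12]
  rw [Even.pow_abs (⟨1, rfl⟩ : Even 2) v, Even.pow_abs (⟨2, rfl⟩ : Even 4) v,
    Even.pow_abs (⟨3, rfl⟩ : Even 6) v]
  have hv' : (v:ℝ) ≠ 0 := hv
  have hA : (1:ℝ)/p * (|f v| ^ p / v^2) = ((1/p) * |f v|^p)/v^2 := by ring
  have hB : (1:ℝ)/12 * (|f v| ^ (12:ℕ) / v^2) = ((1/12) * |f v|^(12:ℕ))/v^2 := by ring
  have hC : (2:ℝ)/3 * v^4 = ((2/3) * v^6)/v^2 := by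
    field_simp
  rw [hA, hB, hC, ← add_div, ← sub_div]

lemma f_ne_zero {v : ℝ} (hv : v ≠ 0) : f v ≠ 0 := fun h =>
  hv (f_strictMono.injective (h.trans f_zero.symm))

lemma part3 (p : ℝ) (hp : 2 < p) :
    Tendsto (fun v : ℝ => htilde p v / |v|) (𝓝[≠] (0:ℝ)) (𝓝 0) := by
  have e1 : Tendsto (fun v : ℝ => |f v| ^ (p-1) / |v| ^ (1:ℝ)) (𝓝[≠] (0:ℝ)) (𝓝 0) :=
    aux_zero (by linarith) (by linarith)
  have e2 : Tendsto (fun v : ℝ => |f v| ^ (11:ℝ) / |v| ^ (1:ℝ)) (𝓝[≠] (0:ℝ)) (𝓝 0) :=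
    aux_zero (by norm_num) (by norm_num)
  have e3 : Tendsto (fun v : ℝ => 4 * |v| ^ (4:ℕ)) (𝓝[≠] (0:ℝ)) (𝓝 0) := by
    have h : Continuous (fun v : ℝ => 4 * |v| ^ (4:ℕ)) := by continuity
    have h0 := h.tendsto 0
    norm_num at h0
    exact h0.mono_left nhdsWithin_le_nhds
  have hB := (e1.add e2).add e3
  rw [show (0:ℝ) + 0 + 0 = 0 by ring] at hB
  apply squeeze_zero_norm' ?_ hB
  filter_upwards [self_mem_nhdsWithin] with v hv
  have hv' : (v:ℝ) ≠ 0 := hv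
  have hv0 : (0:ℝ) < |v| := abs_pos.mpr hv
  have hf0 : (0:ℝ) < |f v| := abs_pos.mpr (f_ne_zero hv)
  have hd0 := deriv_f_nonneg v
  have hd1 := deriv_f_le_one v
  have h1 : abs (|f v| ^ (p-2) * f v * deriv f v) ≤ |f v| ^ (p-1) := by
    rw [abs_mul, abs_mul, abs_of_nonneg (Real.rpow_nonneg (abs_nonneg _) _),
      abs_of_nonneg hd0]
    calc |f v| ^ (p-2) * |f v| * deriv f v ≤ |f v| ^ (p-2) * |f v| * 1 := by
          apply mul_le_mul_of_nonneg_left hd1 (by positivity)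
      _ = |f v| ^ (p-1) := by
          rw [mul_one, show p - 1 = (p-2) + 1 by ring, Real.rpow_add hf0, Real.rpow_one]
  have h2 : abs (|f v| ^ (10:ℕ) * f v * deriv f v) ≤ |f v| ^ (11:ℝ) := by
    rw [abs_mul, abs_mul, abs_of_nonneg (pow_nonneg (abs_nonneg _) _), abs_of_nonneg hd0]
    calc |f v| ^ (10:ℕ) * |f v| * deriv f v ≤ |f v| ^ (10:ℕ) * |f v| * 1 := by
          apply mul_le_mul_of_nonneg_left hd1 (by positivity)
      _ = |f v| ^ (11:ℝ) := by
          rw [mul_one, ← pow_succ, show (11:ℝ) = ((11:ℕ):ℝ) by norm_num, Real.rpow_natCast]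
  have h3 : |4 * |v| ^ (4:ℕ) * v| = 4 * |v| ^ (5:ℕ) := by
    rw [abs_mul, abs_mul, abs_of_nonneg (by norm_num : (0:ℝ) ≤ 4),
      abs_of_nonneg (pow_nonneg (abs_nonneg v) 4)]
    ring
  have htri : |htilde p v| ≤ |f v| ^ (p-1) + |f v| ^ (11:ℝ) + 4 * |v| ^ (5:ℕ) := by
    rw [htilde]
    calc abs (|f v| ^ (p - 2) * f v * deriv f v + |f v| ^ (10:ℕ) * f v * deriv f v
          - 4 * |v| ^ (4:ℕ) * v)
        ≤ abs (|f v| ^ (p - 2) * f v * deriv f v + |f v| ^ (10:ℕ) * f v * deriv f v)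
          + abs (4 * |v| ^ (4:ℕ) * v) := abs_sub _ _
      _ ≤ abs (|f v| ^ (p - 2) * f v * deriv f v) + abs (|f v| ^ (10:ℕ) * f v * deriv f v)
          + abs (4 * |v| ^ (4:ℕ) * v) := by gcongr; exact abs_add_le _ _
      _ ≤ _ := by rw [h3]; gcongr
  rw [Real.norm_eq_abs, abs_div, abs_abs, Real.rpow_one]
  calc |htilde p v| / |v| ≤ (|f v| ^ (p-1) + |f v| ^ (11:ℝ) + 4 * |v| ^ (5:ℕ)) / |v| := by
        gcongr
    _ = _ := by
        rw [add_div, add_div]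
        congr 1
        rw [pow_succ]
        field_simp

lemma f_neg {v : ℝ} (hv : v < 0) : f v < 0 := by
  have := f_strictMono hv; rwa [f_zero] at this

lemma abs_f (v : ℝ) : |f v| = f |v| := by
  rcases le_or_gt 0 v with h | h
  · rw [abs_of_nonneg (f_nonneg h), abs_of_nonneg h]
  · rw [abs_of_neg (f_neg h), abs_of_neg h, f_odd]

lemma deriv_f_even (v : ℝ) : deriv f (-v) = deriv f v := by
  rw [deriv_f, deriv_f, f_odd]
  ring_nf

lemma Htilde_abs (p v : ℝ) : Htilde p v = Htilde p |v| := by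
  rw [Htilde, Htilde, abs_f, abs_abs, abs_of_nonneg (f_nonneg (abs_nonneg v))]

lemma htilde_odd (p v : ℝ) : htilde p (-v) = - htilde p v := by
  rw [htilde, htilde, f_odd, deriv_f_even, abs_neg, abs_neg]
  ring

lemma abs_htilde (p v : ℝ) : |htilde p v| = abs (htilde p |v|) := by
  rcases le_or_gt 0 v with h | h
  · rw [abs_of_nonneg h]
  · rw [abs_of_neg h, ← neg_neg v, htilde_odd, abs_neg, neg_neg]

lemma tendsto_abs_cocompact : Tendsto (fun v : ℝ => |v|) (cocompact ℝ) atTop := by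
  have := tendsto_norm_cocompact_atTop (E := ℝ)
  exact this.congr Real.norm_eq_abs

-- f t * deriv f t → (√2)⁻¹
lemma fd_tendsto : Tendsto (fun t : ℝ => f t * deriv f t) atTop (𝓝 (Real.sqrt 2)⁻¹) := by
  have hφ : Tendsto (fun x : ℝ => (Real.sqrt ((x ^ 2)⁻¹ + 2))⁻¹) atTop (𝓝 (Real.sqrt 2)⁻¹) := by
    have h1 : Tendsto (fun x : ℝ => (x ^ 2)⁻¹ + 2) atTop (𝓝 2) := by
      have h2 := ((tendsto_inv_atTop_zero (𝕜 := ℝ)).pow 2).add_const (2:ℝ)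
      norm_num at h2
      exact h2
    have h2 : Tendsto (fun x : ℝ => Real.sqrt ((x ^ 2)⁻¹ + 2)) atTop (𝓝 (Real.sqrt 2)) :=
      (Real.continuous_sqrt.tendsto 2).comp h1
    exact h2.inv₀ (by positivity)
  have point : ∀ x : ℝ, 0 < x →
      (Real.sqrt ((x ^ 2)⁻¹ + 2))⁻¹ = x * (Real.sqrt (1 + 2 * x ^ 2))⁻¹ := by
    intro x hx
    have hs : Real.sqrt (1 + 2 * x ^ 2) = x * Real.sqrt ((x ^ 2)⁻¹ + 2) := by
      rw [← Real.sqrt_sq hx.le, ← Real.sqrt_mul (by positivity)]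
      congr 1
      field_simp
      rw [Real.sq_sqrt (by positivity)]
    rw [hs, mul_inv, ← mul_assoc, mul_inv_cancel₀ hx.ne', one_mul]
  apply (hφ.comp f_tendsto_atTop).congr'
  filter_upwards [f_tendsto_atTop.eventually (eventually_gt_atTop (0:ℝ))] with t ht
  simp only [Function.comp]
  rw [point (f t) ht, deriv_f]

lemma rpow_sq_abs (x : ℝ) {q : ℝ} : ((x:ℝ) ^ 2) ^ (q/2) = |x| ^ q := by
  rw [← sq_abs, ← Real.rpow_natCast |x| 2, ← Real.rpow_mul (abs_nonneg _)]
  norm_num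
  congr 1
  ring

lemma sqrt2_pow4 : (Real.sqrt 2) ^ (4:ℕ) = 4 := by
  calc (Real.sqrt 2) ^ (4:ℕ) = (Real.sqrt 2 * Real.sqrt 2) ^ (2:ℕ) := by ring
    _ = 4 := by rw [sqrt2_sq]; norm_num

lemma sqrt2_pow6 : (Real.sqrt 2) ^ (6:ℕ) = 8 := by
  calc (Real.sqrt 2) ^ (6:ℕ) = (Real.sqrt 2 * Real.sqrt 2) ^ (3:ℕ) := by ring
    _ = 8 := by rw [sqrt2_sq]; norm_num

-- |f t|^q / t^n → 0 along atTop if q/2 < n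
lemma aux_top {q : ℝ} {n : ℕ} (hq : 0 < q) (hqn : q / 2 < (n:ℝ)) :
    Tendsto (fun t : ℝ => |f t| ^ q / t ^ n) atTop (𝓝 0) := by
  have hlim : Tendsto (fun t : ℝ => (Real.sqrt 2) ^ (q/2) * t ^ (q/2 - n)) atTop (𝓝 0) := by
    have h0 : Tendsto (fun t : ℝ => t ^ (-((n:ℝ) - q/2))) atTop (𝓝 0) :=
      tendsto_rpow_neg_atTop (by linarith)
    have h1 : (fun t : ℝ => t ^ (-((n:ℝ) - q/2))) = fun t : ℝ => t ^ (q/2 - (n:ℝ)) := by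
      ext t; norm_num
    rw [h1] at h0
    simpa using h0.const_mul ((Real.sqrt 2) ^ (q/2))
  apply squeeze_zero_norm' ?_ hlim
  filter_upwards [eventually_gt_atTop (0:ℝ)] with t ht
  have ht6 : (0:ℝ) < t ^ n := by positivity
  rw [Real.norm_eq_abs, abs_div, abs_of_nonneg (Real.rpow_nonneg (abs_nonneg _) _),
    abs_of_nonneg ht6.le]
  calc |f t| ^ q / t ^ n ≤ (Real.sqrt 2 * t) ^ (q/2) / t ^ n := by
        gcongr
        rw [← rpow_sq_abs (f t)]
        exact Real.rpow_le_rpow (sq_nonneg _) (f_sq_le ht.le) (by linarith)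
    _ = (Real.sqrt 2) ^ (q/2) * t ^ (q/2 - n) := by
        rw [Real.mul_rpow (Real.sqrt_nonneg 2) ht.le, Real.rpow_sub ht,
          ← Real.rpow_natCast t n]
        ring
  
lemma key2 (p : ℝ) (hp : 2 < p) (hp' : p < 10/3) :
    Tendsto (fun t : ℝ => Htilde p t / |t| ^ (6:ℕ)) atTop (𝓝 0) := by
  have c1 : Tendsto (fun t : ℝ => |f t| ^ p / t ^ (6:ℕ)) atTop (𝓝 0) :=
    aux_top (by linarith) (by push_cast; linarith)
  have c2 : Tendsto (fun t : ℝ => ((f t) ^ 2 / t) ^ (6:ℕ)) atTop (𝓝 8) := by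
    have h := fsq_div_tendsto.pow 6
    rwa [sqrt2_pow6] at h
  have comb := (c1.const_mul (1/p)).add ((c2.const_mul (1/12)).sub_const (2/3))
  rw [show (1/p) * 0 + ((1/12) * 8 - 2/3) = (0:ℝ) by ring] at comb
  apply comb.congr'
  filter_upwards [eventually_gt_atTop (0:ℝ)] with t ht
  have ht' : t ≠ 0 := ht.ne'
  rw [Htilde, abs_of_nonneg ht.le, abs_of_nonneg (f_nonneg ht.le)]
  have h12 : (f t) ^ (12:ℕ) = (f t ^ 2 / t) ^ (6:ℕ) * t ^ (6:ℕ) := by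
    field_simp
  have hp0 : p ≠ 0 := by linarith
  rw [h12]
  field_simp
  ring

lemma part2 (p : ℝ) (hp : 2 < p) (hp' : p < 10/3) :
    Tendsto (fun v : ℝ => Htilde p v / |v| ^ (6:ℕ)) (cocompact ℝ) (𝓝 0) := by
  have h := (key2 p hp hp').comp tendsto_abs_cocompact
  apply h.congr
  intro v
  simp only [Function.comp_apply]
  rw [← Htilde_abs, abs_abs]

lemma sqrt2_ne : Real.sqrt 2 ≠ 0 := by positivity

lemma key4 (p : ℝ) (hp : 2 < p) (hp' : p < 10/3) :
    Tendsto (fun t : ℝ => htilde p t / |t| ^ (5:ℕ)) atTop (𝓝 0) := by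
  have hT1 : Tendsto (fun t : ℝ => |f t| ^ (p-2) * f t * deriv f t / t ^ (5:ℕ))
      atTop (𝓝 0) := by
    have hbase := aux_top (q := p - 1) (n := 5) (by linarith) (by push_cast; linarith)
    apply squeeze_zero_norm' ?_ hbase
    filter_upwards [f_tendsto_atTop.eventually (eventually_gt_atTop (0:ℝ)),
      eventually_gt_atTop (0:ℝ)] with t hft ht
    have ht5 : (0:ℝ) < t ^ (5:ℕ) := by positivity
    rw [Real.norm_eq_abs, abs_div, abs_of_nonneg ht5.le]
    gcongr
    rw [abs_mul, abs_mul, abs_of_nonneg (Real.rpow_nonneg (abs_nonneg _) _),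
      abs_of_nonneg (deriv_f_nonneg t)]
    calc |f t| ^ (p-2) * |f t| * deriv f t ≤ |f t| ^ (p-2) * |f t| * 1 :=
          mul_le_mul_of_nonneg_left (deriv_f_le_one t) (by positivity)
      _ = |f t| ^ (p-1) := by
          rw [mul_one, show p - 1 = (p-2) + 1 by ring,
            Real.rpow_add (abs_pos.mpr hft.ne'), Real.rpow_one]
  have hT2 : Tendsto (fun t : ℝ => |f t| ^ (10:ℕ) * f t * deriv f t / t ^ (5:ℕ))
      atTop (𝓝 4) := by
    have h := (fsq_div_tendsto.pow 5).mul fd_tendsto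
    have hval : (Real.sqrt 2) ^ (5:ℕ) * (Real.sqrt 2)⁻¹ = 4 := by
      rw [show (5:ℕ) = 4 + 1 from rfl, pow_succ, mul_assoc,
        mul_inv_cancel₀ sqrt2_ne, mul_one, sqrt2_pow4]
    rw [hval] at h
    apply h.congr'
    filter_upwards [eventually_gt_atTop (0:ℝ)] with t ht
    rw [Even.pow_abs ⟨5, rfl⟩]
    rw [div_pow, ← pow_mul]
    field_simp
  have hT3 : Tendsto (fun t : ℝ => 4 * |t| ^ (4:ℕ) * t / t ^ (5:ℕ)) atTop (𝓝 4) := by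
    apply tendsto_const_nhds.congr'
    filter_upwards [eventually_gt_atTop (0:ℝ)] with t ht
    rw [abs_of_nonneg ht.le]
    field_simp
  have comb := (hT1.add hT2).sub hT3
  rw [show (0:ℝ) + 4 - 4 = 0 by ring] at comb
  apply comb.congr'
  filter_upwards [eventually_gt_atTop (0:ℝ)] with t ht
  rw [htilde, abs_of_nonneg ht.le, sub_div, add_div]

lemma part4 (p : ℝ) (hp : 2 < p) (hp' : p < 10/3) :
    Tendsto (fun v : ℝ => htilde p v / |v| ^ (5:ℕ)) (cocompact ℝ) (𝓝 0) := by
  rw [tendsto_zero_iff_norm_tendsto_zero]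
  have h := ((key4 p hp hp').comp tendsto_abs_cocompact).norm
  rw [norm_zero] at h
  apply h.congr
  intro v
  simp only [Function.comp_apply, Real.norm_eq_abs, abs_div, abs_abs]
  rw [← abs_htilde]

/-- Asymptotic behaviour of the modified nonlinearities `H̃` and `h̃` at `0`
and at infinity. -/
theorem stmt_8 (p : ℝ) (hp : 2 < p) (hp' : p < 10 / 3) :
    Tendsto (fun v : ℝ => Htilde p v / v ^ 2) (𝓝[≠] 0) (𝓝 0)
    ∧ Tendsto (fun v : ℝ => Htilde p v / |v| ^ (6:ℕ)) (cocompact ℝ) (𝓝 0)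
    ∧ Tendsto (fun v : ℝ => htilde p v / |v|) (𝓝[≠] 0) (𝓝 0)
    ∧ Tendsto (fun v : ℝ => htilde p v / |v| ^ (5:ℕ)) (cocompact ℝ) (𝓝 0) := by
  exact ⟨part1 p hp, part2 p hp hp', part3 p hp, part4 p hp hp'⟩
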